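/- arXiv:2507.14940 — 3 statements merged into one kernel-verified Lean document; each statement's English description precedes it below -/
import Mathlib

section
/- For any complex m×n matrices A and Ã, with H = (AᴴA)^{1/2} and H̃ = (ÃᴴÃ)^{1/2}, one has ‖H − H̃‖_F ≤ √2 · ‖A − Ã‖_F. -/
open scoped BigOperators Matrix ComplexOrder

noncomputable def frob {m n : ℕ} (A : Matrix (Fin m) (Fin n) ℂ) : ℝ :=
  Real.sqrt (∑ i, ∑ j, ‖A i j‖ ^ 2)

noncomputable def absMat {m n : ℕ} (A : Matrix (Fin m) (Fin n) ℂ) :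
    Matrix (Fin n) (Fin n) ℂ :=
  (Matrix.posSemidef_conjTranspose_mul_self A).1.eigenvectorUnitary.1 *
    Matrix.diagonal ((↑) ∘ (√·) ∘ (Matrix.posSemidef_conjTranspose_mul_self A).1.eigenvalues) *
    (star (Matrix.posSemidef_conjTranspose_mul_self A).1.eigenvectorUnitary : Matrix (Fin n) (Fin n) ℂ)

noncomputable def svdMat (m n r : ℕ) (σ : ℕ → ℝ) : Matrix (Fin m) (Fin n) ℂ :=
  Matrix.of fun i j =>
    if (i : ℕ) = (j : ℕ) ∧ (i : ℕ) < r then ((σ ((i : ℕ) + 1) : ℝ) : ℂ) else 0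

/-- `A` admits a singular value decomposition with singular values
`σ 1, …, σ r` (indexed from 1) on the diagonal. -/
def HasSVD {m n : ℕ} (A : Matrix (Fin m) (Fin n) ℂ) (r : ℕ) (σ : ℕ → ℝ) : Prop :=
  ∃ (U : Matrix (Fin m) (Fin m) ℂ) (V : Matrix (Fin n) (Fin n) ℂ),
    Uᴴ * U = 1 ∧ U * Uᴴ = 1 ∧ Vᴴ * V = 1 ∧ V * Vᴴ = 1 ∧
    A = U * svdMat m n r σ * Vᴴ

/-- `σ 1 ≥ σ 2 ≥ … ≥ σ r > 0`. -/
def SingVals (r : ℕ) (σ : ℕ → ℝ) : Prop :=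
  (∀ j, 1 ≤ j → j ≤ r → 0 < σ j) ∧ ∀ j, 1 ≤ j → j < r → σ (j + 1) ≤ σ j

/-- Generalized polar decomposition: `A = Q * |A|`, where `Q` is a rank-`r` partial
isometry such that the column space of `Qᴴ` equals the column space of `|A|`. -/
def IsPolar {m n : ℕ} (A Q : Matrix (Fin m) (Fin n) ℂ) (r : ℕ) : Prop :=
  A = Q * absMat A ∧ Q * Qᴴ * Q = Q ∧ Q.rank = r ∧
    LinearMap.range (Matrix.mulVecLin Qᴴ) =
      LinearMap.range (Matrix.mulVecLin (absMat A))

/-!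
For Hermitian `X`, `Y` with eigenbases `U`, `V` and eigenvalues `a`, `b`, writing `W = Uᴴ V` gives
`‖f(X) - f(Y)‖_F² = ∑ᵢⱼ (f aᵢ - f bⱼ)² |Wᵢⱼ|²`, so any `1`-Lipschitz `f`, in particular `|·|`,
satisfies `‖f(X) - f(Y)‖_F ≤ ‖X - Y‖_F`. A rectangular `A` is reduced to this case through its
Hermitian dilation `[[0, Aᴴ], [A, 0]]`, whose absolute value is `diag(|A|, |Aᴴ|)` and whose
Frobenius norm is `√2 ‖A‖_F`.
-/

open Matrix
open scoped MatrixOrder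

namespace Matrix

theorem fromBlocks_sub {l m n o α : Type*} [Sub α] (A A' : Matrix n l α) (B B' : Matrix n o α)
    (C C' : Matrix m l α) (D D' : Matrix m o α) :
    fromBlocks A B C D - fromBlocks A' B' C' D' =
      fromBlocks (A - A') (B - B') (C - C') (D - D') := by
  ext (i | i) (j | j) <;> rfl

variable {𝕜 : Type*} [RCLike 𝕜] {m n : Type*}

section Frobenius

variable [Fintype m] [Fintype n]

noncomputable def frobNormSq (A : Matrix m n 𝕜) : ℝ := ∑ i, ∑ j, ‖A i j‖ ^ 2

lemma frobNormSq_nonneg (A : Matrix m n 𝕜) : 0 ≤ frobNormSq A := by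
  unfold frobNormSq
  positivity

@[simp]
lemma frobNormSq_zero : frobNormSq (0 : Matrix m n 𝕜) = 0 := by
  simp [frobNormSq]

lemma frobNormSq_eq_re_trace (A : Matrix m n 𝕜) :
    frobNormSq A = RCLike.re (Aᴴ * A).trace := by
  simp only [frobNormSq, trace, diag, mul_apply, conjTranspose_apply, RCLike.star_def,
    RCLike.conj_mul, map_sum, ← RCLike.ofReal_pow, RCLike.ofReal_re]
  exact Finset.sum_comm

lemma frobNormSq_conjTranspose (A : Matrix m n 𝕜) : frobNormSq Aᴴ = frobNormSq A := by
  simp only [frobNormSq, conjTranspose_apply, norm_star]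
  exact Finset.sum_comm

lemma frobNormSq_unitary_mul [DecidableEq m] {U : Matrix m m 𝕜} (hU : U ∈ unitaryGroup m 𝕜)
    (A : Matrix m n 𝕜) : frobNormSq (U * A) = frobNormSq A := by
  rw [frobNormSq_eq_re_trace, frobNormSq_eq_re_trace, conjTranspose_mul, Matrix.mul_assoc,
    ← Matrix.mul_assoc Uᴴ, ← star_eq_conjTranspose, Unitary.star_mul_self_of_mem hU,
    Matrix.one_mul]

lemma frobNormSq_mul_unitary [DecidableEq n] (A : Matrix m n 𝕜) {U : Matrix n n 𝕜}
    (hU : U ∈ unitaryGroup n 𝕜) : frobNormSq (A * U) = frobNormSq A := by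
  rw [← frobNormSq_conjTranspose, conjTranspose_mul, ← star_eq_conjTranspose U,
    frobNormSq_unitary_mul (Unitary.star_mem hU), frobNormSq_conjTranspose]

lemma frobNormSq_fromBlocks {l o : Type*} [Fintype l] [Fintype o] (A : Matrix n l 𝕜)
    (B : Matrix n o 𝕜) (C : Matrix m l 𝕜) (D : Matrix m o 𝕜) :
    frobNormSq (fromBlocks A B C D) =
      frobNormSq A + frobNormSq B + frobNormSq C + frobNormSq D := by
  simp only [frobNormSq, Fintype.sum_sum_type, fromBlocks_apply₁₁, fromBlocks_apply₁₂,
    fromBlocks_apply₂₁, fromBlocks_apply₂₂, Finset.sum_add_distrib]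
  ring

-- Without the ascriptions `(RCLike.ofReal ∘ a : m → 𝕜)` the products below elaborate through
-- the `CStarMatrix` multiplication instance and the lemmas no longer rewrite plain matrices.
lemma frobNormSq_diagonal_mul_sub_mul_diagonal [DecidableEq m] [DecidableEq n]
    (a : m → ℝ) (b : n → ℝ) (W : Matrix m n 𝕜) :
    frobNormSq (diagonal (RCLike.ofReal ∘ a : m → 𝕜) * W -
        W * diagonal (RCLike.ofReal ∘ b : n → 𝕜)) =
      ∑ i, ∑ j, (a i - b j) ^ 2 * ‖W i j‖ ^ 2 := by
  refine Finset.sum_congr rfl fun i _ => Finset.sum_congr rfl fun j _ => ?_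
  rw [Matrix.sub_apply, diagonal_mul, mul_diagonal, Function.comp_apply, Function.comp_apply,
    mul_comm (W i j), ← sub_mul, ← RCLike.ofReal_sub, norm_mul, RCLike.norm_ofReal, mul_pow,
    sq_abs]

lemma frobNormSq_conj_diagonal_sub_conj_diagonal [DecidableEq n] {U V : Matrix n n 𝕜}
    (hU : U ∈ unitaryGroup n 𝕜) (hV : V ∈ unitaryGroup n 𝕜) (a b : n → ℝ) :
    frobNormSq (U * diagonal (RCLike.ofReal ∘ a : n → 𝕜) * star U -
        V * diagonal (RCLike.ofReal ∘ b : n → 𝕜) * star V) =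
      ∑ i, ∑ j, (a i - b j) ^ 2 * ‖(star U * V) i j‖ ^ 2 := by
  have hconj : U * diagonal (RCLike.ofReal ∘ a : n → 𝕜) * star U -
      V * diagonal (RCLike.ofReal ∘ b : n → 𝕜) * star V =
      U * (diagonal (RCLike.ofReal ∘ a : n → 𝕜) * (star U * V) -
        (star U * V) * diagonal (RCLike.ofReal ∘ b : n → 𝕜)) * star V := by
    simp only [Matrix.mul_sub, Matrix.sub_mul, Matrix.mul_assoc, Unitary.mul_star_self_of_mem hV,
      Matrix.mul_one]
    simp only [← Matrix.mul_assoc, Unitary.mul_star_self_of_mem hU, Matrix.one_mul]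
  rw [hconj, frobNormSq_mul_unitary _ (Unitary.star_mem hV), frobNormSq_unitary_mul hU,
    frobNormSq_diagonal_mul_sub_mul_diagonal]

end Frobenius

section Hermitian

variable [Fintype n] [DecidableEq n] {X Y : Matrix n n 𝕜}

lemma frobNormSq_cfc_sub_cfc (hX : X.IsHermitian) (hY : Y.IsHermitian) (f : ℝ → ℝ) :
    frobNormSq (cfc f X - cfc f Y) =
      ∑ i, ∑ j, (f (hX.eigenvalues i) - f (hY.eigenvalues j)) ^ 2 *
        ‖(star (hX.eigenvectorUnitary : Matrix n n 𝕜) * hY.eigenvectorUnitary) i j‖ ^ 2 := by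
  rw [hX.cfc_eq, hY.cfc_eq, IsHermitian.cfc, IsHermitian.cfc, Unitary.conjStarAlgAut_apply,
    Unitary.conjStarAlgAut_apply]
  exact frobNormSq_conj_diagonal_sub_conj_diagonal hX.eigenvectorUnitary.2
    hY.eigenvectorUnitary.2 (f ∘ hX.eigenvalues) (f ∘ hY.eigenvalues)

lemma frobNormSq_cfc_sub_cfc_le {K : NNReal} {f : ℝ → ℝ} (hf : LipschitzWith K f)
    (hX : X.IsHermitian) (hY : Y.IsHermitian) :
    frobNormSq (cfc f X - cfc f Y) ≤ K ^ 2 * frobNormSq (X - Y) := by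
  conv_rhs => rw [← cfc_id' ℝ X, ← cfc_id' ℝ Y]
  rw [frobNormSq_cfc_sub_cfc hX hY, frobNormSq_cfc_sub_cfc hX hY, Finset.mul_sum]
  refine Finset.sum_le_sum fun i _ => ?_
  rw [Finset.mul_sum]
  refine Finset.sum_le_sum fun j _ => ?_
  rw [← mul_assoc, ← mul_pow (K : ℝ)]
  refine mul_le_mul_of_nonneg_right (sq_le_sq.mpr ?_) (by positivity)
  simpa [abs_mul, Real.dist_eq] using hf.dist_le_mul (hX.eigenvalues i) (hY.eigenvalues j)

lemma frobNormSq_cfcAbs_sub_cfcAbs_le (hX : X.IsHermitian) (hY : Y.IsHermitian) :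
    frobNormSq (CFC.abs X - CFC.abs Y) ≤ frobNormSq (X - Y) := by
  rw [CFC.abs_eq_cfc_norm X hX.isSelfAdjoint, CFC.abs_eq_cfc_norm Y hY.isSelfAdjoint]
  simpa using frobNormSq_cfc_sub_cfc_le (f := (‖·‖)) lipschitzWith_one_norm hX hY

end Hermitian

section Dilation

def hermitianDilation (A : Matrix m n 𝕜) : Matrix (n ⊕ m) (n ⊕ m) 𝕜 :=
  fromBlocks 0 Aᴴ A 0

lemma isHermitian_hermitianDilation (A : Matrix m n 𝕜) : (hermitianDilation A).IsHermitian := by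
  simp [hermitianDilation, IsHermitian, fromBlocks_conjTranspose]

lemma hermitianDilation_sub (A B : Matrix m n 𝕜) :
    hermitianDilation A - hermitianDilation B = hermitianDilation (A - B) := by
  simp [hermitianDilation, fromBlocks_sub]

variable [Fintype m] [Fintype n]

lemma frobNormSq_hermitianDilation (A : Matrix m n 𝕜) :
    frobNormSq (hermitianDilation A) = 2 * frobNormSq A := by
  rw [hermitianDilation, frobNormSq_fromBlocks, frobNormSq_conjTranspose, frobNormSq_zero,
    frobNormSq_zero]
  ring

lemma hermitianDilation_conjTranspose_mul_self (A : Matrix m n 𝕜) :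
    (hermitianDilation A)ᴴ * hermitianDilation A = fromBlocks (Aᴴ * A) 0 0 (A * Aᴴ) := by
  simp [hermitianDilation, fromBlocks_conjTranspose, fromBlocks_multiply]

lemma PosSemidef.fromBlocks_diagonal {P : Matrix n n 𝕜} {Q : Matrix m m 𝕜} (hP : P.PosSemidef)
    (hQ : Q.PosSemidef) : (fromBlocks P 0 0 Q).PosSemidef := by
  classical
  obtain ⟨B, rfl⟩ := CStarAlgebra.nonneg_iff_eq_star_mul_self.mp hP.nonneg
  obtain ⟨C, rfl⟩ := CStarAlgebra.nonneg_iff_eq_star_mul_self.mp hQ.nonneg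
  simpa [star_eq_conjTranspose, fromBlocks_conjTranspose, fromBlocks_multiply] using
    posSemidef_conjTranspose_mul_self (fromBlocks B 0 0 C)

variable [DecidableEq m] [DecidableEq n]

lemma cfcSqrt_fromBlocks_diagonal {P : Matrix n n 𝕜} {Q : Matrix m m 𝕜} (hP : P.PosSemidef)
    (hQ : Q.PosSemidef) :
    CFC.sqrt (fromBlocks P 0 0 Q) = fromBlocks (CFC.sqrt P) 0 0 (CFC.sqrt Q) := by
  refine CFC.sqrt_unique ?_ (PosSemidef.fromBlocks_diagonal (CFC.sqrt_nonneg P).posSemidef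
    (CFC.sqrt_nonneg Q).posSemidef).nonneg
  simp [fromBlocks_multiply, CFC.sqrt_mul_sqrt_self P hP.nonneg, CFC.sqrt_mul_sqrt_self Q hQ.nonneg]

lemma cfcAbs_hermitianDilation (A : Matrix m n 𝕜) :
    CFC.abs (hermitianDilation A) = fromBlocks (CFC.sqrt (Aᴴ * A)) 0 0 (CFC.sqrt (A * Aᴴ)) := by
  rw [CFC.abs, star_eq_conjTranspose, hermitianDilation_conjTranspose_mul_self,
    cfcSqrt_fromBlocks_diagonal (posSemidef_conjTranspose_mul_self A)
      (posSemidef_self_mul_conjTranspose A)]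

theorem frobNormSq_cfcSqrt_sub_cfcSqrt_le (A B : Matrix m n 𝕜) :
    frobNormSq (CFC.sqrt (Aᴴ * A) - CFC.sqrt (Bᴴ * B)) ≤ 2 * frobNormSq (A - B) := by
  have h := frobNormSq_cfcAbs_sub_cfcAbs_le (isHermitian_hermitianDilation A)
    (isHermitian_hermitianDilation B)
  rw [cfcAbs_hermitianDilation, cfcAbs_hermitianDilation, fromBlocks_sub, frobNormSq_fromBlocks,
    hermitianDilation_sub, frobNormSq_hermitianDilation] at h
  simp only [sub_self, frobNormSq_zero, add_zero] at h
  linarith [frobNormSq_nonneg (CFC.sqrt (A * Aᴴ) - CFC.sqrt (B * Bᴴ))]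

end Dilation

end Matrix

lemma absMat_eq_cfcSqrt {m n : ℕ} (A : Matrix (Fin m) (Fin n) ℂ) :
    absMat A = CFC.sqrt (Aᴴ * A) := by
  have hA := Matrix.posSemidef_conjTranspose_mul_self A
  rw [CFC.sqrt_eq_real_sqrt _ hA.nonneg, cfcₙ_eq_cfc, hA.1.cfc_eq, Matrix.IsHermitian.cfc,
    Unitary.conjStarAlgAut_apply]
  rfl

lemma frob_eq_sqrt_frobNormSq {m n : ℕ} (A : Matrix (Fin m) (Fin n) ℂ) :
    frob A = √(Matrix.frobNormSq A) :=
  rfl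

theorem araki_yamagami
    (m n : ℕ) (A At : Matrix (Fin m) (Fin n) ℂ) :
    frob (absMat A - absMat At) ≤ Real.sqrt 2 * frob (A - At) := by
  rw [frob_eq_sqrt_frobNormSq, frob_eq_sqrt_frobNormSq, ← Real.sqrt_mul zero_le_two,
    absMat_eq_cfcSqrt, absMat_eq_cfcSqrt]
  exact Real.sqrt_le_sqrt (Matrix.frobNormSq_cfcSqrt_sub_cfcSqrt_le A At)
end

section
/- Let m, n be positive integers, let r ≤ s ≤ min(m,n), and let A be a complex m×n matrix of rank r with singular values σ_1 ≥ … ≥ σ_r > 0 and Ã a complex m×n matrix of rank s with singular values σ̃_1 ≥ … ≥ σ̃_s > 0. Set H = (AᴴA)^{1/2} and H̃ = (ÃᴴÃ)^{1/2}. If r ≠ s, or r = s but σ_j ≠ σ̃_j for some j, then the strict inequality ‖H − H̃‖_F < √2 · ‖A − Ã‖_F holds. -/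
open scoped BigOperators Matrix ComplexOrder

/-!
Write `X_A` for the block matrix `[[|Aᴴ|, A], [Aᴴ, |A|]]`. An SVD `A = U S Vᴴ` exhibits `X_A` as a
Gram matrix, so it is positive semidefinite, and so is `X_{-Ã}`. Hence `0 ≤ tr (X_A X_{-Ã})`, i.e.
`2 Re tr (Aᴴ Ã) ≤ Re tr (|A| |Ã|) + Re tr (|Aᴴ| |Ãᴴ|)`. Since `‖|A|‖_F = ‖|Aᴴ|‖_F = ‖A‖_F`,
expanding the squares turns this into
`‖|A| - |Ã|‖_F² + ‖|Aᴴ| - |Ãᴴ|‖_F² ≤ 2 ‖A - Ã‖_F²`.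
The second summand on the left is positive under the hypothesis: `|Aᴴ| = U diag(σ, 0) Uᴴ` and
`|Ãᴴ| = Ũ diag(τ, 0) Ũᴴ`, so `|Aᴴ| = |Ãᴴ|` forces equal characteristic polynomials, hence equal
multisets of zero-padded singular values, and sorted sequences with equal multisets coincide.
-/

open Matrix
open scoped MatrixOrder

section AbsoluteValue
variable {m n : ℕ}

lemma absMat_eq_sqrt (A : Matrix (Fin m) (Fin n) ℂ) : absMat A = CFC.sqrt (Aᴴ * A) := by
  have hA := posSemidef_conjTranspose_mul_self A
  rw [CFC.sqrt_eq_real_sqrt _ hA.nonneg, cfcₙ_eq_cfc, hA.1.cfc_eq]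
  rfl

lemma posSemidef_absMat (A : Matrix (Fin m) (Fin n) ℂ) : (absMat A).PosSemidef := by
  rw [absMat_eq_sqrt]
  exact (CFC.sqrt_nonneg _).posSemidef

lemma absMat_mul_self (A : Matrix (Fin m) (Fin n) ℂ) : absMat A * absMat A = Aᴴ * A := by
  rw [absMat_eq_sqrt]
  exact CFC.sqrt_mul_sqrt_self _ (posSemidef_conjTranspose_mul_self A).nonneg

lemma absMat_eq_of_mul_self {A : Matrix (Fin m) (Fin n) ℂ} {P : Matrix (Fin n) (Fin n) ℂ}
    (hP : P.PosSemidef) (h : P * P = Aᴴ * A) : absMat A = P := by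
  rw [absMat_eq_sqrt]
  exact CFC.sqrt_unique h hP.nonneg

lemma absMat_neg (A : Matrix (Fin m) (Fin n) ℂ) : absMat (-A) = absMat A := by
  rw [absMat_eq_sqrt, absMat_eq_sqrt, conjTranspose_neg, Matrix.neg_mul, Matrix.mul_neg, neg_neg]

end AbsoluteValue

section Frobenius
variable {m n : ℕ}

lemma frob_sq (A : Matrix (Fin m) (Fin n) ℂ) : frob A ^ 2 = (Aᴴ * A).trace.re := by
  rw [frob, Real.sq_sqrt (by positivity), trace, Complex.re_sum, Finset.sum_comm]
  refine Finset.sum_congr rfl fun j _ => ?_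
  simp only [diag_apply, mul_apply, conjTranspose_apply, Complex.re_sum]
  refine Finset.sum_congr rfl fun i _ => ?_
  rw [Complex.star_def, ← Complex.normSq_eq_norm_sq, Complex.normSq_apply]
  simp only [Complex.mul_re, Complex.conj_re, Complex.conj_im]
  ring

lemma frob_pos {A : Matrix (Fin m) (Fin n) ℂ} (hA : A ≠ 0) : 0 < frob A := by
  obtain ⟨i, j, hij⟩ : ∃ i j, A i j ≠ 0 := by
    by_contra! h
    exact hA (Matrix.ext h)
  refine Real.sqrt_pos.2 (Finset.sum_pos' (fun _ _ => by positivity) ⟨i, Finset.mem_univ _, ?_⟩)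
  exact Finset.sum_pos' (fun _ _ => by positivity) ⟨j, Finset.mem_univ _, by positivity⟩

lemma frob_conjTranspose (A : Matrix (Fin m) (Fin n) ℂ) : frob Aᴴ = frob A := by
  rw [frob, frob, Finset.sum_comm]
  simp only [conjTranspose_apply, norm_star]

lemma re_trace_conjTranspose_mul_comm {ι κ : Type*} [Fintype ι] [Fintype κ]
    (A B : Matrix ι κ ℂ) : (Bᴴ * A).trace.re = (Aᴴ * B).trace.re := by
  rw [← conjTranspose_conjTranspose A, ← conjTranspose_mul, trace_conjTranspose,
    conjTranspose_conjTranspose, Complex.star_def, Complex.conj_re]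

lemma frob_sub_sq (A B : Matrix (Fin m) (Fin n) ℂ) :
    frob (A - B) ^ 2 = frob A ^ 2 + frob B ^ 2 - 2 * (Aᴴ * B).trace.re := by
  rw [frob_sq, frob_sq, frob_sq, conjTranspose_sub, Matrix.sub_mul, Matrix.mul_sub,
    Matrix.mul_sub, trace_sub, trace_sub, trace_sub, Complex.sub_re, Complex.sub_re,
    Complex.sub_re, re_trace_conjTranspose_mul_comm A B]
  ring

lemma frob_absMat_sq (A : Matrix (Fin m) (Fin n) ℂ) : frob (absMat A) ^ 2 = frob A ^ 2 := by
  rw [frob_sq, frob_sq, (posSemidef_absMat A).1.eq, absMat_mul_self]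

end Frobenius

section Blocks
variable {ι κ : Type*} [Fintype ι] [Fintype κ]

lemma trace_fromBlocks {R : Type*} [AddCommMonoid R] (P : Matrix ι ι R) (B : Matrix ι κ R)
    (C : Matrix κ ι R) (Q : Matrix κ κ R) : (fromBlocks P B C Q).trace = P.trace + Q.trace := by
  simp [trace, Fintype.sum_sum_type]

lemma Matrix.PosSemidef.trace_mul_nonneg {X Y : Matrix ι ι ℂ} (hX : X.PosSemidef)
    (hY : Y.PosSemidef) : 0 ≤ (X * Y).trace := by
  classical
  obtain ⟨K, rfl⟩ := CStarAlgebra.nonneg_iff_eq_star_mul_self.mp hX.nonneg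
  rw [star_eq_conjTranspose, Matrix.mul_assoc, trace_mul_comm]
  exact (hY.mul_mul_conjTranspose_same K).trace_nonneg

lemma two_mul_re_trace_le_of_posSemidef_fromBlocks {P P' : Matrix ι ι ℂ} {Q Q' : Matrix κ κ ℂ}
    {A B : Matrix ι κ ℂ} (hA : (fromBlocks P A Aᴴ Q).PosSemidef)
    (hB : (fromBlocks P' (-B) (-Bᴴ) Q').PosSemidef) :
    2 * (Aᴴ * B).trace.re ≤ (P * P').trace.re + (Q * Q').trace.re := by
  have h := (Complex.le_def.1 (hA.trace_mul_nonneg hB)).1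
  rw [fromBlocks_multiply, trace_fromBlocks] at h
  simp only [Matrix.mul_neg, trace_add, trace_neg, Complex.add_re, Complex.neg_re,
    Complex.zero_re] at h
  rw [trace_mul_comm A, re_trace_conjTranspose_mul_comm] at h
  linarith

end Blocks

section SVDMatrix
variable {m n k r : ℕ} {σ τ : ℕ → ℝ}

lemma svdMat_conjTranspose : (svdMat m n r σ)ᴴ = svdMat n m r σ := by
  ext i j
  by_cases hij : (i : ℕ) = j
  · simp [svdMat, hij, apply_ite (starRingEnd ℂ)]
  · simp [svdMat, hij, Ne.symm hij]

lemma svdMat_congr (h : ∀ j, 1 ≤ j → j ≤ r → σ j = τ j) : svdMat m n r σ = svdMat m n r τ := by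
  ext i j
  simp only [svdMat, of_apply]
  split_ifs with hij
  · rw [h _ (Nat.le_add_left 1 _) hij.2]
  · rfl

lemma svdMat_mul_svdMat (h : r ≤ k) :
    svdMat m k r σ * svdMat k n r τ = svdMat m n r (σ * τ) := by
  ext i j
  simp only [svdMat, mul_apply, of_apply]
  by_cases hi : (i : ℕ) < r
  · rw [Finset.sum_eq_single ⟨i, hi.trans_le h⟩]
    · simp [hi]
    · intro l _ hl
      rw [Ne, Fin.ext_iff] at hl
      simp [Ne.symm hl]
    · simp
  · simp [hi]

lemma svdMat_sqrt_mul_svdMat_sqrt (hσ : ∀ j, 1 ≤ j → j ≤ r → 0 ≤ σ j) (h : r ≤ k) :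
    svdMat m k r (fun j => √(σ j)) * svdMat k n r (fun j => √(σ j)) = svdMat m n r σ := by
  rw [svdMat_mul_svdMat h]
  exact svdMat_congr fun j hj hjr => Real.mul_self_sqrt (hσ j hj hjr)

lemma posSemidef_svdMat (hσ : ∀ j, 1 ≤ j → j ≤ r → 0 ≤ σ j) (hrn : r ≤ n) :
    (svdMat n n r σ).PosSemidef := by
  have h := posSemidef_conjTranspose_mul_self (svdMat n n r fun j => √(σ j))
  rwa [svdMat_conjTranspose, svdMat_sqrt_mul_svdMat_sqrt hσ hrn] at h

end SVDMatrix

section SVD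
variable {m n r : ℕ} {σ : ℕ → ℝ}

lemma absMat_of_svd {U : Matrix (Fin m) (Fin m) ℂ} {V : Matrix (Fin n) (Fin n) ℂ}
    (hU : Uᴴ * U = 1) (hV : Vᴴ * V = 1) (hσ : ∀ j, 1 ≤ j → j ≤ r → 0 ≤ σ j)
    (hrm : r ≤ m) (hrn : r ≤ n) :
    absMat (U * svdMat m n r σ * Vᴴ) = V * svdMat n n r σ * Vᴴ := by
  refine absMat_eq_of_mul_self ((posSemidef_svdMat hσ hrn).mul_mul_conjTranspose_same V) ?_
  calc V * svdMat n n r σ * Vᴴ * (V * svdMat n n r σ * Vᴴ)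
      = V * (svdMat n n r σ * (Vᴴ * V) * svdMat n n r σ) * Vᴴ := by
        simp only [Matrix.mul_assoc]
    _ = V * (svdMat n m r σ * (Uᴴ * U) * svdMat m n r σ) * Vᴴ := by
      rw [hU, hV, Matrix.mul_one, Matrix.mul_one, svdMat_mul_svdMat hrn, svdMat_mul_svdMat hrm]
    _ = (U * svdMat m n r σ * Vᴴ)ᴴ * (U * svdMat m n r σ * Vᴴ) := by
      simp only [conjTranspose_mul, conjTranspose_conjTranspose, svdMat_conjTranspose,
        Matrix.mul_assoc]

lemma HasSVD.conjTranspose {A : Matrix (Fin m) (Fin n) ℂ} (hA : HasSVD A r σ) :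
    HasSVD Aᴴ r σ := by
  obtain ⟨U, V, hU, hU', hV, hV', rfl⟩ := hA
  exact ⟨V, U, hV, hV', hU, hU', by
    simp only [conjTranspose_mul, conjTranspose_conjTranspose, svdMat_conjTranspose,
      Matrix.mul_assoc]⟩

lemma HasSVD.neg {A : Matrix (Fin m) (Fin n) ℂ} (hA : HasSVD A r σ) : HasSVD (-A) r σ := by
  obtain ⟨U, V, hU, hU', hV, hV', rfl⟩ := hA
  exact ⟨-U, V, by simpa using hU, by simpa using hU', hV, hV', by simp⟩

lemma posSemidef_fromBlocks_of_svd {A : Matrix (Fin m) (Fin n) ℂ} (hA : HasSVD A r σ)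
    (hσ : ∀ j, 1 ≤ j → j ≤ r → 0 ≤ σ j) (hrm : r ≤ m) (hrn : r ≤ n) :
    (fromBlocks (absMat Aᴴ) A Aᴴ (absMat A)).PosSemidef := by
  obtain ⟨U, V, hU, -, hV, -, rfl⟩ := hA
  have hAh : (U * svdMat m n r σ * Vᴴ)ᴴ = V * svdMat n m r σ * Uᴴ := by
    simp only [conjTranspose_mul, conjTranspose_conjTranspose, svdMat_conjTranspose,
      Matrix.mul_assoc]
  rw [absMat_of_svd hU hV hσ hrm hrn, hAh, absMat_of_svd hV hU hσ hrn hrm]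
  set K := fromCols (svdMat m m r (fun j => √(σ j)) * Uᴴ) (svdMat m n r (fun j => √(σ j)) * Vᴴ)
  convert posSemidef_conjTranspose_mul_self K using 1
  simp only [K, conjTranspose_fromCols_eq_fromRows_conjTranspose, fromRows_mul_fromCols,
    conjTranspose_mul, conjTranspose_conjTranspose, svdMat_conjTranspose, Matrix.mul_assoc]
  simp only [← Matrix.mul_assoc (svdMat _ _ r _), svdMat_sqrt_mul_svdMat_sqrt hσ hrm,
    ← Matrix.mul_assoc]

theorem frob_absMat_sub_sq_add_le {s : ℕ} {τ : ℕ → ℝ} {A B : Matrix (Fin m) (Fin n) ℂ}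
    (hA : HasSVD A r σ) (hB : HasSVD B s τ) (hσ : ∀ j, 1 ≤ j → j ≤ r → 0 ≤ σ j)
    (hτ : ∀ j, 1 ≤ j → j ≤ s → 0 ≤ τ j) (hrm : r ≤ m) (hrn : r ≤ n) (hsm : s ≤ m)
    (hsn : s ≤ n) :
    frob (absMat A - absMat B) ^ 2 + frob (absMat Aᴴ - absMat Bᴴ) ^ 2 ≤ 2 * frob (A - B) ^ 2 := by
  have hB' := posSemidef_fromBlocks_of_svd hB.neg hτ hsm hsn
  rw [absMat_neg, conjTranspose_neg, absMat_neg] at hB'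
  have key := two_mul_re_trace_le_of_posSemidef_fromBlocks
    (posSemidef_fromBlocks_of_svd hA hσ hrm hrn) hB'
  rw [frob_sub_sq, frob_sub_sq, frob_sub_sq, (posSemidef_absMat A).1.eq,
    (posSemidef_absMat Aᴴ).1.eq, frob_absMat_sq, frob_absMat_sq, frob_absMat_sq,
    frob_absMat_sq, frob_conjTranspose, frob_conjTranspose]
  linarith

end SVD

section SingularValues

def padSingVals (r : ℕ) (σ : ℕ → ℝ) (j : ℕ) : ℝ := if j < r then σ (j + 1) else 0

lemma svdMat_eq_diagonal {k r : ℕ} (σ : ℕ → ℝ) :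
    svdMat k k r σ = diagonal (fun i : Fin k => (padSingVals r σ i : ℂ)) := by
  ext i j
  by_cases hij : i = j
  · subst hij
    simp [svdMat, padSingVals, apply_ite Complex.ofReal]
  · simp [svdMat, hij, Fin.val_ne_of_ne hij]

variable {r s : ℕ} {σ τ : ℕ → ℝ}

lemma SingVals.nonneg (hσ : SingVals r σ) : ∀ j, 1 ≤ j → j ≤ r → 0 ≤ σ j :=
  fun j hj hjr => (hσ.1 j hj hjr).le

lemma SingVals.antitone_padSingVals (hσ : SingVals r σ) : Antitone (padSingVals r σ) := by
  refine antitone_nat_of_succ_le fun j => ?_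
  unfold padSingVals
  split_ifs with h1 h2 h2
  · exact hσ.2 (j + 1) (Nat.le_add_left 1 j) h1
  · omega
  · exact (hσ.1 (j + 1) (Nat.le_add_left 1 j) h2).le
  · exact le_rfl

lemma SingVals.eq_of_padSingVals_eq {k : ℕ} (hσ : SingVals r σ) (hτ : SingVals s τ)
    (hr : r ≤ k) (hs : s ≤ k) (h : ∀ i < k, padSingVals r σ i = padSingVals s τ i) :
    r = s ∧ ∀ j, 1 ≤ j → j ≤ r → σ j = τ j := by
  have hrs : r = s := by
    by_contra hne
    rcases Nat.lt_or_gt_of_ne hne with hlt | hlt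
    · have hr' := h r (hlt.trans_le hs)
      simp only [padSingVals, lt_irrefl, if_false, hlt, if_true] at hr'
      exact (hτ.1 (r + 1) (Nat.le_add_left 1 r) hlt).ne hr'
    · have hs' := h s (hlt.trans_le hr)
      simp only [padSingVals, lt_irrefl, if_false, hlt, if_true] at hs'
      exact (hσ.1 (s + 1) (Nat.le_add_left 1 s) hlt).ne' hs'
  subst hrs
  refine ⟨rfl, fun j hj hjr => ?_⟩
  have hj' := h (j - 1) (by omega)
  simpa [padSingVals, show j - 1 < r by omega, Nat.sub_add_cancel hj] using hj'

lemma eq_of_antitone_of_map_univ_eq {α : Type*} [LinearOrder α] {k : ℕ} {f g : Fin k → α}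
    (hf : Antitone f) (hg : Antitone g) (h : Finset.univ.val.map f = Finset.univ.val.map g) :
    f = g := by
  rw [Fin.univ_val_map, Fin.univ_val_map, Multiset.coe_eq_coe] at h
  exact List.ofFn_injective (h.eq_of_sortedGE hf.sortedGE_ofFn hg.sortedGE_ofFn)

lemma roots_charpoly_diagonal {ι : Type*} [Fintype ι] [DecidableEq ι] (d : ι → ℂ) :
    (diagonal d).charpoly.roots = Finset.univ.val.map d := by
  rw [charpoly_diagonal, Finset.prod_eq_multiset_prod, ← Polynomial.roots_multiset_prod_X_sub_C
    (Finset.univ.val.map d), Multiset.map_map, Function.comp_def]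

lemma charpoly_mul_mul_conjTranspose {ι : Type*} [Fintype ι] [DecidableEq ι]
    {V : Matrix ι ι ℂ} (hV : Vᴴ * V = 1) (D : Matrix ι ι ℂ) :
    (V * D * Vᴴ).charpoly = D.charpoly := by
  rw [charpoly_mul_comm, ← Matrix.mul_assoc, hV, Matrix.one_mul]

lemma SingVals.eq_of_absMat_conjTranspose_eq {m n : ℕ} {A B : Matrix (Fin m) (Fin n) ℂ}
    (hσ : SingVals r σ) (hτ : SingVals s τ) (hA : HasSVD A r σ) (hB : HasSVD B s τ)
    (hrm : r ≤ m) (hrn : r ≤ n) (hsm : s ≤ m) (hsn : s ≤ n) (h : absMat Aᴴ = absMat Bᴴ) :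
    r = s ∧ ∀ j, 1 ≤ j → j ≤ r → σ j = τ j := by
  obtain ⟨V, U, hV, -, hU, -, hA⟩ := hA.conjTranspose
  obtain ⟨V', U', hV', -, hU', -, hB⟩ := hB.conjTranspose
  rw [hA, hB, absMat_of_svd hV hU hσ.nonneg hrn hrm, absMat_of_svd hV' hU' hτ.nonneg hsn hsm] at h
  have hroots := congrArg (fun M => M.charpoly.roots) h
  simp only [charpoly_mul_mul_conjTranspose hU, charpoly_mul_mul_conjTranspose hU',
    svdMat_eq_diagonal, roots_charpoly_diagonal] at hroots
  have hpad := eq_of_antitone_of_map_univ_eq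
    (hσ.antitone_padSingVals.comp_monotone Fin.val_strictMono.monotone)
    (hτ.antitone_padSingVals.comp_monotone Fin.val_strictMono.monotone)
    (Multiset.map_injective Complex.ofReal_injective
      (by simpa only [Multiset.map_map, Function.comp_def] using hroots))
  exact hσ.eq_of_padSingVals_eq hτ hrm hsm fun i hi => congrFun hpad ⟨i, hi⟩

end SingularValues

theorem strict_araki_yamagami_general
    (m n r s : ℕ) (hrs : r ≤ s) (hsmn : s ≤ min m n)
    (A At : Matrix (Fin m) (Fin n) ℂ)
    (σ τ : ℕ → ℝ) (hσ : SingVals r σ) (hτ : SingVals s τ)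
    (hA : HasSVD A r σ) (hAtilde : HasSVD At s τ)
    (hne : r ≠ s ∨ (r = s ∧ ∃ j, 1 ≤ j ∧ j ≤ r ∧ σ j ≠ τ j)) :
    frob (absMat A - absMat At) < Real.sqrt 2 * frob (A - At) := by
  have hsm : s ≤ m := hsmn.trans (min_le_left m n)
  have hsn : s ≤ n := hsmn.trans (min_le_right m n)
  have hle := frob_absMat_sub_sq_add_le hA hAtilde hσ.nonneg hτ.nonneg (hrs.trans hsm)
    (hrs.trans hsn) hsm hsn
  have hpos : 0 < frob (absMat Aᴴ - absMat Atᴴ) := by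
    refine frob_pos (sub_ne_zero.2 fun h => ?_)
    obtain ⟨hrs', hστ⟩ := hσ.eq_of_absMat_conjTranspose_eq hτ hA hAtilde (hrs.trans hsm)
      (hrs.trans hsn) hsm hsn h
    rcases hne with hne | ⟨-, j, hj, hjr, hστj⟩
    · exact hne hrs'
    · exact hστj (hστ j hj hjr)
  have hsq : frob (absMat A - absMat At) ^ 2 < (Real.sqrt 2 * frob (A - At)) ^ 2 := by
    rw [mul_pow, Real.sq_sqrt zero_le_two]
    nlinarith
  exact lt_of_pow_lt_pow_left₀ 2 (mul_nonneg (Real.sqrt_nonneg _) (Real.sqrt_nonneg _)) hsq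

theorem strict_araki_yamagami
    (m n r s : ℕ) (hm : 0 < m) (hn : 0 < n) (hrs : r ≤ s) (hsmn : s ≤ min m n)
    (A At : Matrix (Fin m) (Fin n) ℂ)
    (σ τ : ℕ → ℝ) (hσ : SingVals r σ) (hτ : SingVals s τ)
    (hA : HasSVD A r σ) (hAtilde : HasSVD At s τ)
    (hrankA : A.rank = r) (hrankAt : At.rank = s)
    (hne : r ≠ s ∨ (r = s ∧ ∃ j, 1 ≤ j ∧ j ≤ r ∧ σ j ≠ τ j)) :
    frob (absMat A - absMat At) < Real.sqrt 2 * frob (A - At) :=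
  strict_araki_yamagami_general m n r s hrs hsmn A At σ τ hσ hτ hA hAtilde hne
end

section
/- Let m, n be positive integers, let r ≤ s ≤ min(m,n), let A be a complex m×n matrix of rank r with singular values σ_1 ≥ … ≥ σ_r > 0, and let B be a complex m×n matrix of rank s with singular values σ̂_1 ≥ … ≥ σ̂_s > 0. Then |tr(BᴴA)| ≤ ( Σ_{j=1}^r σ_j σ̂_j ) / ( (Σ_{j=1}^r σ_j²)^{1/2} (Σ_{j=1}^s σ̂_j²)^{1/2} ) · ‖A‖_F ‖B‖_F. -/
/-!
Both matrices have thin singular value decompositions over the first `s` coordinates,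
`A = X Dₐ Yᴴ` and `B = X' D_b Y'ᴴ`, where `a` is `σ` padded by zeros. Hence
`tr (Bᴴ A) = ∑ᵢ ∑ⱼ bᵢ Wᵢⱼ aⱼ Zⱼᵢ`, where `W` and `Z` are `s × s` corners of the unitaries
`U'ᴴ U` and `Vᴴ V'`. By AM-GM, `|Wᵢⱼ Zⱼᵢ| ≤ dᵢⱼ := (|Wᵢⱼ|² + |Zⱼᵢ|²) / 2`, and `d` is doubly
substochastic. Summing by parts in both indices writes `∑ bᵢ aⱼ dᵢⱼ` as a nonnegative combination
(the gaps of the decreasing sequences `a`, `b`) of the partial sums `∑_{i ≤ k, j ≤ l} dᵢⱼ`, each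
at most `min (k, l) + 1`, which is the corresponding partial sum of the identity matrix. This is
von Neumann's bound `|tr (Bᴴ A)| ≤ ∑ⱼ σⱼ σ̂ⱼ`; the right-hand side of the theorem is this sum,
because `frob A = (∑ σⱼ²)^(1/2)` and `frob B = (∑ σ̂ⱼ²)^(1/2)`.
-/

open scoped BigOperators Matrix ComplexOrder

open Finset Matrix

section Substochastic

variable {N : ℕ} {a b : ℕ → ℝ}

lemma eq_sum_ite_sub_succ (haN : a N = 0) (i : Fin N) :
    a i = ∑ k : Fin N, if i ≤ k then a k - a (k + 1) else 0 := by
  have hfilter : (range N).filter (fun k => (i : ℕ) ≤ k) = Ico (i : ℕ) N := by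
    ext k; simp only [mem_filter, mem_range, mem_Ico]; omega
  have htelescope := sum_Ico_sub (fun k => -a k) i.isLt.le
  simp only [haN, neg_sub_neg, neg_zero, zero_sub] at htelescope
  simp only [Fin.le_def]
  rw [Fin.sum_univ_eq_sum_range (fun k => if (i : ℕ) ≤ k then a k - a (k + 1) else 0),
    ← sum_filter, hfilter, htelescope, neg_neg]

lemma sum_mul_eq_sum_sub_succ_mul_sum_Iic (haN : a N = 0) (x : Fin N → ℝ) :
    ∑ i : Fin N, a i * x i = ∑ k : Fin N, (a k - a (k + 1)) * ∑ i ∈ Iic k, x i := by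
  calc ∑ i : Fin N, a i * x i
      = ∑ i : Fin N, ∑ k : Fin N, if i ≤ k then (a k - a (k + 1)) * x i else 0 := by
        refine sum_congr rfl fun i _ => ?_
        rw [eq_sum_ite_sub_succ haN i, sum_mul]
        simp only [ite_mul, zero_mul]
    _ = ∑ k : Fin N, ∑ i : Fin N, if i ≤ k then (a k - a (k + 1)) * x i else 0 := sum_comm
    _ = _ := by
        simp only [← sum_filter, filter_ge_eq_Iic, mul_sum]

lemma sum_sum_mul_mul_eq (haN : a N = 0) (hbN : b N = 0) (f : Fin N → Fin N → ℝ) :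
    ∑ i : Fin N, ∑ j : Fin N, a i * b j * f i j = ∑ k : Fin N, ∑ l : Fin N,
      (a k - a (k + 1)) * (b l - b (l + 1)) * ∑ i ∈ Iic k, ∑ j ∈ Iic l, f i j := by
  simp_rw [mul_assoc, ← mul_sum, sum_mul_eq_sum_sub_succ_mul_sum_Iic haN]
  refine sum_congr rfl fun k _ => ?_
  rw [sum_comm]
  simp_rw [← mul_sum]
  rw [sum_mul_eq_sum_sub_succ_mul_sum_Iic hbN, mul_sum, mul_sum]
  refine sum_congr rfl fun l _ => ?_
  rw [sum_comm (s := Iic k)]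

lemma sum_Iic_sum_Iic_le_of_le {d : Fin N → Fin N → ℝ} (hd : ∀ i j, 0 ≤ d i j)
    (hrow : ∀ i, ∑ j, d i j ≤ 1) {k l : Fin N} (hkl : k ≤ l) :
    ∑ i ∈ Iic k, ∑ j ∈ Iic l, d i j ≤ ∑ i ∈ Iic k, ∑ j ∈ Iic l, if i = j then 1 else 0 := by
  refine sum_le_sum fun i hi => ?_
  rw [sum_ite_eq, if_pos (mem_Iic.2 ((mem_Iic.1 hi).trans hkl))]
  exact (sum_le_univ_sum_of_nonneg (hd i)).trans (hrow i)

lemma sum_Iic_sum_Iic_le {d : Fin N → Fin N → ℝ} (hd : ∀ i j, 0 ≤ d i j)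
    (hrow : ∀ i, ∑ j, d i j ≤ 1) (hcol : ∀ j, ∑ i, d i j ≤ 1) (k l : Fin N) :
    ∑ i ∈ Iic k, ∑ j ∈ Iic l, d i j ≤ ∑ i ∈ Iic k, ∑ j ∈ Iic l, if i = j then 1 else 0 := by
  rcases le_total k l with hkl | hlk
  · exact sum_Iic_sum_Iic_le_of_le hd hrow hkl
  · rw [sum_comm, sum_comm (s := Iic k)]
    have := sum_Iic_sum_Iic_le_of_le (d := fun j i => d i j) (fun j i => hd i j) hcol hlk
    simpa only [eq_comm] using this

theorem sum_sum_mul_mul_le_of_substochastic (ha : Antitone a) (hb : Antitone b)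
    (haN : a N = 0) (hbN : b N = 0) {d : Fin N → Fin N → ℝ} (hd : ∀ i j, 0 ≤ d i j)
    (hrow : ∀ i, ∑ j, d i j ≤ 1) (hcol : ∀ j, ∑ i, d i j ≤ 1) :
    ∑ i : Fin N, ∑ j : Fin N, a i * b j * d i j ≤ ∑ i : Fin N, a i * b i := by
  have hdiag : ∑ i : Fin N, a i * b i =
      ∑ i : Fin N, ∑ j : Fin N, a i * b j * if i = j then 1 else 0 := by
    simp only [mul_ite, mul_one, mul_zero, sum_ite_eq, mem_univ, if_true]
  rw [hdiag, sum_sum_mul_mul_eq haN hbN, sum_sum_mul_mul_eq haN hbN]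
  refine sum_le_sum fun k _ => sum_le_sum fun l _ => mul_le_mul_of_nonneg_left
    (sum_Iic_sum_Iic_le hd hrow hcol k l) ?_
  exact mul_nonneg (sub_nonneg.2 (ha (Nat.le_succ _))) (sub_nonneg.2 (hb (Nat.le_succ _)))

theorem norm_sum_sum_mul_le_of_sum_norm_sq_le_one {𝕜 : Type*} [RCLike 𝕜]
    (ha : Antitone a) (hb : Antitone b) (haN : a N = 0) (hbN : b N = 0)
    {W Z : Matrix (Fin N) (Fin N) 𝕜}
    (hWrow : ∀ i, ∑ j, ‖W i j‖ ^ 2 ≤ 1) (hWcol : ∀ j, ∑ i, ‖W i j‖ ^ 2 ≤ 1)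
    (hZrow : ∀ i, ∑ j, ‖Z i j‖ ^ 2 ≤ 1) (hZcol : ∀ j, ∑ i, ‖Z i j‖ ^ 2 ≤ 1) :
    ‖∑ i : Fin N, ∑ j : Fin N, (a i : 𝕜) * W i j * b j * Z j i‖ ≤ ∑ i : Fin N, a i * b i := by
  have ha0 (i : Fin N) : 0 ≤ a i := haN ▸ ha i.isLt.le
  have hb0 (j : Fin N) : 0 ≤ b j := hbN ▸ hb j.isLt.le
  set d : Fin N → Fin N → ℝ := fun i j => (‖W i j‖ ^ 2 + ‖Z j i‖ ^ 2) / 2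
  have hd (i j : Fin N) : 0 ≤ d i j := by positivity
  have hdrow (i : Fin N) : ∑ j, d i j ≤ 1 := by
    simp only [d, ← sum_div, sum_add_distrib]
    linarith [hWrow i, hZcol i]
  have hdcol (j : Fin N) : ∑ i, d i j ≤ 1 := by
    simp only [d, ← sum_div, sum_add_distrib]
    linarith [hWcol j, hZrow j]
  calc ‖∑ i : Fin N, ∑ j : Fin N, (a i : 𝕜) * W i j * b j * Z j i‖
      ≤ ∑ i : Fin N, ∑ j : Fin N, ‖(a i : 𝕜) * W i j * b j * Z j i‖ :=
        (norm_sum_le _ _).trans (sum_le_sum fun i _ => norm_sum_le _ _)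
    _ ≤ ∑ i : Fin N, ∑ j : Fin N, a i * b j * d i j := by
        refine sum_le_sum fun i _ => sum_le_sum fun j _ => ?_
        rw [norm_mul, norm_mul, norm_mul, RCLike.norm_ofReal, RCLike.norm_ofReal,
          abs_of_nonneg (ha0 i), abs_of_nonneg (hb0 j)]
        calc a i * ‖W i j‖ * b j * ‖Z j i‖ = a i * b j * (‖W i j‖ * ‖Z j i‖) := by ring
          _ ≤ a i * b j * d i j := mul_le_mul_of_nonneg_left
              (by simp only [d]; linarith [two_mul_le_add_sq ‖W i j‖ ‖Z j i‖])
              (mul_nonneg (ha0 i) (hb0 j))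
    _ ≤ ∑ i : Fin N, a i * b i :=
        sum_sum_mul_mul_le_of_substochastic ha hb haN hbN hd hdrow hdcol

end Substochastic

section Unitary

variable {𝕜 n l : Type*} [RCLike 𝕜] [Fintype n] [DecidableEq n] [Fintype l]

lemma sum_norm_sq_row_eq_one {U : Matrix n n 𝕜} (hU : U ∈ unitaryGroup n 𝕜) (i : n) :
    ∑ j, ‖U i j‖ ^ 2 = 1 := by
  have h : (U * Uᴴ) i i = 1 := by
    rw [← star_eq_conjTranspose, mem_unitaryGroup_iff.1 hU, one_apply_eq]
  simp only [mul_apply, conjTranspose_apply, ← starRingEnd_apply,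
    RCLike.mul_conj] at h
  exact_mod_cast h

lemma sum_norm_sq_submatrix_row_le_one {U : Matrix n n 𝕜} (hU : U ∈ unitaryGroup n 𝕜)
    (e : l ↪ n) (i : l) : ∑ j, ‖U.submatrix e e i j‖ ^ 2 ≤ 1 := by
  rw [← sum_norm_sq_row_eq_one hU (e i)]
  simp only [submatrix_apply]
  rw [← sum_map univ e (fun x => ‖U (e i) x‖ ^ 2)]
  exact sum_le_univ_sum_of_nonneg fun _ => sq_nonneg _

lemma sum_norm_sq_submatrix_col_le_one {U : Matrix n n 𝕜} (hU : U ∈ unitaryGroup n 𝕜)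
    (e : l ↪ n) (j : l) : ∑ i, ‖U.submatrix e e i j‖ ^ 2 ≤ 1 := by
  simpa [star_eq_conjTranspose] using sum_norm_sq_submatrix_row_le_one (Unitary.star_mem hU) e j

end Unitary

section Trace

variable {𝕜 m n ι : Type*} [RCLike 𝕜] [Fintype m] [Fintype n] [Fintype ι] [DecidableEq ι]

lemma trace_conjTranspose_mul_self_eq_sum_norm_sq (A : Matrix m n 𝕜) :
    (Aᴴ * A).trace = ((∑ i, ∑ j, ‖A i j‖ ^ 2 : ℝ) : 𝕜) := by
  rw [trace, sum_comm]
  push_cast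
  refine sum_congr rfl fun j _ => sum_congr rfl fun i _ => ?_
  simp [← starRingEnd_apply, RCLike.conj_mul]

lemma trace_conjTranspose_mul_eq_sum (X X' : Matrix m ι 𝕜) (Y Y' : Matrix n ι 𝕜) (a b : ι → 𝕜) :
    ((X' * diagonal b * Y'ᴴ)ᴴ * (X * diagonal a * Yᴴ)).trace =
      ∑ i, ∑ j, star (b i) * (X'ᴴ * X) i j * a j * (Yᴴ * Y') j i := by
  have hcycle : (X' * diagonal b * Y'ᴴ)ᴴ * (X * diagonal a * Yᴴ) =
      Y' * (diagonal (star b) * (X'ᴴ * X) * diagonal a * Yᴴ) := by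
    simp only [conjTranspose_mul, conjTranspose_conjTranspose, diagonal_conjTranspose,
      Matrix.mul_assoc]
  rw [hcycle, trace_mul_comm, Matrix.mul_assoc _ Yᴴ]
  generalize X'ᴴ * X = W
  generalize Yᴴ * Y' = Z
  simp [trace, mul_apply, diagonal_apply]

end Trace

lemma conjTranspose_submatrix_mul_submatrix {α m n l : Type*} [NonUnitalNonAssocSemiring α]
    [Star α] [Fintype m] (X Y : Matrix m n α) (e : l → n) :
    (X.submatrix id e)ᴴ * Y.submatrix id e = (Xᴴ * Y).submatrix e e := by
  rw [conjTranspose_submatrix, submatrix_mul _ _ e id e Function.bijective_id]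

lemma conjTranspose_submatrix_mul_self_eq_one {α m n l : Type*} [NonAssocSemiring α] [Star α]
    [Fintype m] [DecidableEq n] [DecidableEq l] {X : Matrix m n α} (hX : Xᴴ * X = 1)
    (e : l ↪ n) : (X.submatrix id e)ᴴ * X.submatrix id e = 1 := by
  rw [conjTranspose_submatrix_mul_submatrix, hX, submatrix_one_embedding]

def paddedSingVals (r : ℕ) (σ : ℕ → ℝ) (k : ℕ) : ℝ := if k < r then σ (k + 1) else 0

lemma SingVals.antitone_paddedSingVals {r : ℕ} {σ : ℕ → ℝ} (h : SingVals r σ) :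
    Antitone (paddedSingVals r σ) := by
  refine antitone_nat_of_succ_le fun k => ?_
  unfold paddedSingVals
  split_ifs with hk1 hk
  · exact h.2 (k + 1) (by omega) (by omega)
  · omega
  · exact (h.1 (k + 1) (by omega) (by omega)).le
  · rfl

lemma paddedSingVals_of_le {r k : ℕ} (σ : ℕ → ℝ) (h : r ≤ k) : paddedSingVals r σ k = 0 :=
  if_neg (by omega)

lemma sum_paddedSingVals_mul_paddedSingVals {r t N : ℕ} (hrt : r ≤ t) (htN : t ≤ N)
    (σ τ : ℕ → ℝ) :
    ∑ i : Fin N, paddedSingVals r σ i * paddedSingVals t τ i = ∑ j ∈ Icc 1 r, σ j * τ j := by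
  have hprod (i : ℕ) : paddedSingVals r σ i * paddedSingVals t τ i =
      if i < r then σ (i + 1) * τ (i + 1) else 0 := by
    unfold paddedSingVals
    split_ifs <;> first | omega | simp
  have hfilter : (range N).filter (· < r) = range r := by
    ext i; simp only [mem_filter, mem_range]; omega
  rw [Fin.sum_univ_eq_sum_range (fun i => paddedSingVals r σ i * paddedSingVals t τ i),
    sum_congr rfl fun i _ => hprod i, ← sum_filter, hfilter, range_eq_Ico,
    sum_Ico_add' (fun j => σ j * τ j), zero_add, Ico_add_one_right_eq_Icc]

lemma SingVals.sum_sq_pos {r : ℕ} {σ : ℕ → ℝ} (h : SingVals r σ) (hr : 0 < r) :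
    0 < ∑ j ∈ Icc 1 r, σ j ^ 2 :=
  sum_pos (fun j hj => pow_pos (h.1 j (mem_Icc.1 hj).1 (mem_Icc.1 hj).2) 2)
    ⟨1, mem_Icc.2 ⟨le_rfl, hr⟩⟩

lemma svdMat_eq_mul_diagonal_mul {m n s t : ℕ} (hts : t ≤ s) (hsm : s ≤ m) (hsn : s ≤ n)
    (σ : ℕ → ℝ) :
    svdMat m n t σ = (1 : Matrix (Fin m) (Fin m) ℂ).submatrix id (Fin.castLEEmb hsm) *
      diagonal (fun k : Fin s => (paddedSingVals t σ k : ℂ)) *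
      ((1 : Matrix (Fin n) (Fin n) ℂ).submatrix id (Fin.castLEEmb hsn))ᴴ := by
  ext i j
  simp only [svdMat, of_apply, paddedSingVals, conjTranspose_submatrix, conjTranspose_one,
    mul_apply, submatrix_apply, one_apply, id_eq, diagonal_apply, mul_ite, ite_mul, one_mul,
    zero_mul, mul_zero, sum_ite_eq', mem_univ, ↓reduceIte, mul_one]
  simp only [Fin.coe_castLEEmb, Fin.ext_iff, Fin.val_castLE]
  rw [Fin.sum_univ_eq_sum_range (fun x => if x = (j : ℕ) then
    if (i : ℕ) = x then (((if x < t then σ (x + 1) else 0 : ℝ)) : ℂ) else 0 else 0),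
    sum_ite_eq']
  split_ifs <;> simp_all
  omega

lemma mul_svdMat_mul_conjTranspose {m n s t : ℕ} (hts : t ≤ s) (hsm : s ≤ m) (hsn : s ≤ n)
    (σ : ℕ → ℝ) (U : Matrix (Fin m) (Fin m) ℂ) (V : Matrix (Fin n) (Fin n) ℂ) :
    U * svdMat m n t σ * Vᴴ = U.submatrix id (Fin.castLEEmb hsm) *
      diagonal (fun k : Fin s => (paddedSingVals t σ k : ℂ)) *
      (V.submatrix id (Fin.castLEEmb hsn))ᴴ := by
  have hcols {k : ℕ} (hk : s ≤ k) (M : Matrix (Fin k) (Fin k) ℂ) :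
      M * (1 : Matrix (Fin k) (Fin k) ℂ).submatrix id (Fin.castLEEmb hk) =
        M.submatrix id (Fin.castLEEmb hk) :=
    mul_submatrix_one (Equiv.refl _) _ M
  rw [svdMat_eq_mul_diagonal_mul hts hsm hsn, ← hcols hsm U, ← hcols hsn V, conjTranspose_mul]
  simp only [Matrix.mul_assoc]

lemma frob_mul_diagonal_mul_conjTranspose {m n s : ℕ} {X : Matrix (Fin m) (Fin s) ℂ}
    {Y : Matrix (Fin n) (Fin s) ℂ} (hX : Xᴴ * X = 1) (hY : Yᴴ * Y = 1) (a : Fin s → ℝ) :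
    frob (X * diagonal (fun k => (a k : ℂ)) * Yᴴ) = √(∑ k, a k ^ 2) := by
  rw [frob]
  congr 1
  apply RCLike.ofReal_injective (K := ℂ)
  rw [← trace_conjTranspose_mul_self_eq_sum_norm_sq, trace_conjTranspose_mul_eq_sum, hX, hY]
  simp [one_apply, sq]

lemma HasSVD.frob_eq {m n r : ℕ} {A : Matrix (Fin m) (Fin n) ℂ} {σ : ℕ → ℝ}
    (hA : HasSVD A r σ) (hr : r ≤ min m n) :
    frob A = √(∑ j ∈ Icc 1 r, σ j ^ 2) := by
  obtain ⟨U, V, hUU, -, hVV, -, rfl⟩ := hA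
  have hrm : r ≤ m := hr.trans (min_le_left m n)
  have hrn : r ≤ n := hr.trans (min_le_right m n)
  rw [mul_svdMat_mul_conjTranspose le_rfl hrm hrn, frob_mul_diagonal_mul_conjTranspose
    (conjTranspose_submatrix_mul_self_eq_one hUU _) (conjTranspose_submatrix_mul_self_eq_one hVV _)]
  simp only [sq, sum_paddedSingVals_mul_paddedSingVals le_rfl le_rfl]

theorem HasSVD.norm_trace_conjTranspose_mul_le {m n r s : ℕ} {A B : Matrix (Fin m) (Fin n) ℂ}
    {σ σh : ℕ → ℝ} (hA : HasSVD A r σ) (hB : HasSVD B s σh) (hσ : SingVals r σ)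
    (hσh : SingVals s σh) (hrs : r ≤ s) (hsmn : s ≤ min m n) :
    ‖(Bᴴ * A).trace‖ ≤ ∑ j ∈ Icc 1 r, σ j * σh j := by
  obtain ⟨U, V, -, hU, -, hV, rfl⟩ := hA
  obtain ⟨U', V', -, hU', -, hV', rfl⟩ := hB
  have hsm : s ≤ m := hsmn.trans (min_le_left m n)
  have hsn : s ≤ n := hsmn.trans (min_le_right m n)
  have hW : U'ᴴ * U ∈ unitaryGroup (Fin m) ℂ :=
    mul_mem (Unitary.star_mem (mem_unitaryGroup_iff.2 hU')) (mem_unitaryGroup_iff.2 hU)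
  have hZ : Vᴴ * V' ∈ unitaryGroup (Fin n) ℂ :=
    mul_mem (Unitary.star_mem (mem_unitaryGroup_iff.2 hV)) (mem_unitaryGroup_iff.2 hV')
  rw [mul_svdMat_mul_conjTranspose hrs hsm hsn, mul_svdMat_mul_conjTranspose le_rfl hsm hsn,
    trace_conjTranspose_mul_eq_sum, conjTranspose_submatrix_mul_submatrix,
    conjTranspose_submatrix_mul_submatrix]
  simp only [RCLike.star_def, Complex.conj_ofReal]
  calc _ ≤ ∑ i : Fin s, paddedSingVals s σh i * paddedSingVals r σ i :=
        norm_sum_sum_mul_le_of_sum_norm_sq_le_one hσh.antitone_paddedSingVals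
          hσ.antitone_paddedSingVals (paddedSingVals_of_le σh le_rfl) (paddedSingVals_of_le σ hrs)
          (sum_norm_sq_submatrix_row_le_one hW _) (sum_norm_sq_submatrix_col_le_one hW _)
          (sum_norm_sq_submatrix_row_le_one hZ _) (sum_norm_sq_submatrix_col_le_one hZ _)
    _ = ∑ j ∈ Icc 1 r, σ j * σh j := by
        rw [← sum_paddedSingVals_mul_paddedSingVals hrs le_rfl]
        exact sum_congr rfl fun _ _ => mul_comm _ _

theorem stronger_Cauchy_Schwarz_general
    (m n r s : ℕ) (hrs : r ≤ s) (hsmn : s ≤ min m n)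
    (A B : Matrix (Fin m) (Fin n) ℂ)
    (σ σh : ℕ → ℝ) (hσ : SingVals r σ) (hσh : SingVals s σh)
    (hA : HasSVD A r σ) (hB : HasSVD B s σh) :
    ‖Matrix.trace (Bᴴ * A)‖ ≤
      ((∑ j ∈ Finset.Icc 1 r, σ j * σh j) /
        (Real.sqrt (∑ j ∈ Finset.Icc 1 r, σ j ^ 2) *
         Real.sqrt (∑ j ∈ Finset.Icc 1 s, σh j ^ 2))) *
      (frob A * frob B) := by
  rw [hA.frob_eq (hrs.trans hsmn), hB.frob_eq hsmn]
  refine (hA.norm_trace_conjTranspose_mul_le hB hσ hσh hrs hsmn).trans_eq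
    (div_mul_cancel_of_imp fun h0 => ?_).symm
  rcases Nat.eq_zero_or_pos r with rfl | hr
  · simp
  · exact absurd h0 (mul_pos (Real.sqrt_pos.2 (hσ.sum_sq_pos hr))
      (Real.sqrt_pos.2 (hσh.sum_sq_pos (hr.trans_le hrs)))).ne'

theorem stronger_Cauchy_Schwarz
    (m n r s : ℕ) (hm : 0 < m) (hn : 0 < n) (hrs : r ≤ s) (hsmn : s ≤ min m n)
    (A B : Matrix (Fin m) (Fin n) ℂ)
    (σ σh : ℕ → ℝ) (hσ : SingVals r σ) (hσh : SingVals s σh)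
    (hA : HasSVD A r σ) (hB : HasSVD B s σh)
    (hrankA : A.rank = r) (hrankB : B.rank = s) :
    ‖Matrix.trace (Bᴴ * A)‖ ≤
      ((∑ j ∈ Finset.Icc 1 r, σ j * σh j) /
        (Real.sqrt (∑ j ∈ Finset.Icc 1 r, σ j ^ 2) *
         Real.sqrt (∑ j ∈ Finset.Icc 1 s, σh j ^ 2))) *
      (frob A * frob B) :=
  stronger_Cauchy_Schwarz_general m n r s hrs hsmn A B σ σh hσ hσh hA hB
end
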